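/- arXiv:2007.01417 — 4 statements merged into one kernel-verified Lean document; each statement's English description precedes it below -/
import Mathlib

section
/- Let n = a + s and m = b + t. Suppose U is a 2^n × 2^n complex unitary matrix that is an (α, a, ε₁)-block-encoding of a 2^s × 2^s complex matrix A, and V is a 2^m × 2^m complex unitary matrix that is a (β, b, ε₂)-block-encoding of a 2^t × 2^t complex matrix B. Then there exists a permutation matrix S of size 2^{n+m} × 2^{n+m}, depending only on the dimensions a, s, b, t (and not on U or V), such that S (U ⊗ V) S† is an (αβ, a + b, αε₂ + βε₁ + ε₁ε₂)-block-encoding of A ⊗ B, where ⊗ denotes the Kronecker product. -/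
open scoped Kronecker
open Matrix

noncomputable def specNorm {n : Type*} [Fintype n] [DecidableEq n] (A : Matrix n n ℂ) : ℝ :=
  ‖Matrix.toEuclideanCLM (𝕜 := ℂ) A‖

def IsPermMatrix {n : Type*} [Fintype n] [DecidableEq n] (S : Matrix n n ℂ) : Prop :=
  ∃ e : Equiv.Perm n, S = e.permMatrix ℂ

noncomputable def kron {N M : ℕ} (A : Matrix (Fin N) (Fin N) ℂ) (B : Matrix (Fin M) (Fin M) ℂ) :
    Matrix (Fin (N * M)) (Fin (N * M)) ℂ :=
  Matrix.reindex finProdFinEquiv finProdFinEquiv (A ⊗ₖ B)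

def castSq {N M : ℕ} (h : N = M) (A : Matrix (Fin N) (Fin N) ℂ) : Matrix (Fin M) (Fin M) ℂ :=
  Matrix.reindex (finCongr h) (finCongr h) A

def leadBlock {N M : ℕ} (h : M ≤ N) (U : Matrix (Fin N) (Fin N) ℂ) :
    Matrix (Fin M) (Fin M) ℂ :=
  Matrix.of fun i j => U (Fin.castLE h i) (Fin.castLE h j)

theorem twoPowLe (a s : ℕ) : 2 ^ s ≤ 2 ^ (a + s) :=
  Nat.pow_le_pow_right (by norm_num) (Nat.le_add_left s a)

def IsBlockEncoding (a s : ℕ) (α ε : ℝ)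
    (U : Matrix (Fin (2 ^ (a + s))) (Fin (2 ^ (a + s))) ℂ)
    (A : Matrix (Fin (2 ^ s)) (Fin (2 ^ s)) ℂ) : Prop :=
  U ∈ Matrix.unitaryGroup (Fin (2 ^ (a + s))) ℂ ∧
    specNorm (A - (α : ℂ) • leadBlock (twoPowLe a s) U) ≤ ε

/-!
Let `Ũ`, `Ṽ` be the leading blocks of `U`, `V`. Conjugating `U ⊗ V` by the permutation that
regroups the qubits from (ancilla `a`, system `s`, ancilla `b`, system `t`) to
(ancilla `a`, ancilla `b`, system `s`, system `t`) gives a unitary whose leading block is `Ũ ⊗ Ṽ`.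
Then `A ⊗ B - αβ Ũ ⊗ Ṽ = A ⊗ (B - β Ṽ) + (A - α Ũ) ⊗ β Ṽ`, and the operator norm is
submultiplicative under `⊗`; with `‖Ũ‖, ‖Ṽ‖ ≤ 1` (blocks of unitaries) and `‖A‖ ≤ ε₁ + α`
this gives the bound `α ε₂ + β ε₁ + ε₁ ε₂`.
-/

open scoped Matrix.Norms.L2Operator

namespace Matrix

section Submatrix

variable {α : Type*} [NonAssocSemiring α] {l m n : Type*} [Fintype m] [DecidableEq m]

lemma one_submatrix_id_mul (f : l → m) (M : Matrix m n α) :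
    (1 : Matrix m m α).submatrix f id * M = M.submatrix f id := by
  simpa using one_submatrix_mul f (Equiv.refl m) M

lemma mul_one_submatrix_id (f : l → m) (M : Matrix n m α) :
    M * (1 : Matrix m m α).submatrix id f = M.submatrix id f := by
  simpa using mul_submatrix_one (Equiv.refl m) f M

lemma permMatrix_mul_mul_conjTranspose [StarRing α] (σ : Equiv.Perm m) (M : Matrix m m α) :
    σ.permMatrix α * M * (σ.permMatrix α)ᴴ = M.submatrix σ σ := by
  rw [conjTranspose_permMatrix, Equiv.Perm.permMatrix, Equiv.Perm.permMatrix,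
    PEquiv.toMatrix_toPEquiv_mul, PEquiv.mul_toMatrix_toPEquiv, submatrix_submatrix]
  rfl

end Submatrix

lemma reindex_mem_unitaryGroup {α m n : Type*} [CommRing α] [StarRing α] [Fintype m] [Fintype n]
    [DecidableEq m] [DecidableEq n] (e : m ≃ n) {U : Matrix m m α} (hU : U ∈ unitaryGroup m α) :
    reindex e e U ∈ unitaryGroup n α := by
  rw [mem_unitaryGroup_iff] at hU ⊢
  rw [star_eq_conjTranspose, reindex_apply, conjTranspose_submatrix, submatrix_mul_equiv,
    ← star_eq_conjTranspose, hU, submatrix_one_equiv]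

variable {𝕜 : Type*} [RCLike 𝕜] {l m n o : Type*} [Fintype l] [Fintype m] [Fintype n] [Fintype o]

lemma l2_opNorm_one_le [DecidableEq n] : ‖(1 : Matrix n n 𝕜)‖ ≤ 1 := by
  rw [← l2_opNorm_toEuclideanCLM, map_one]
  exact ContinuousLinearMap.norm_id_le

lemma l2_opNorm_le_one_of_conjTranspose_mul_self_eq_one [DecidableEq n] {P : Matrix m n 𝕜}
    (hP : Pᴴ * P = 1) : ‖P‖ ≤ 1 := by
  have h := l2_opNorm_conjTranspose_mul_self P
  rw [hP] at h
  nlinarith [l2_opNorm_one_le (𝕜 := 𝕜) (n := n), norm_nonneg P]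

lemma l2_opNorm_le_one_of_mem_unitaryGroup [DecidableEq n] {U : Matrix n n 𝕜}
    (hU : U ∈ unitaryGroup n 𝕜) : ‖U‖ ≤ 1 :=
  l2_opNorm_le_one_of_conjTranspose_mul_self_eq_one (mem_unitaryGroup_iff'.mp hU)

lemma l2_opNorm_one_submatrix_id_le [DecidableEq l] [DecidableEq m] {f : l → m}
    (hf : Function.Injective f) : ‖(1 : Matrix m m 𝕜).submatrix id f‖ ≤ 1 := by
  apply l2_opNorm_le_one_of_conjTranspose_mul_self_eq_one
  rw [conjTranspose_submatrix, conjTranspose_one, one_submatrix_id_mul, submatrix_submatrix]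
  exact submatrix_one f hf

lemma l2_opNorm_submatrix_le [DecidableEq l] [DecidableEq m] [DecidableEq n] [DecidableEq o]
    (A : Matrix m n 𝕜) {f : l → m} {g : o → n}
    (hf : Function.Injective f) (hg : Function.Injective g) : ‖A.submatrix f g‖ ≤ ‖A‖ := by
  set P := (1 : Matrix m m 𝕜).submatrix id f
  set Q := (1 : Matrix n n 𝕜).submatrix id g
  have hA : A.submatrix f g = Pᴴ * A * Q := by
    rw [conjTranspose_submatrix, conjTranspose_one, one_submatrix_id_mul, mul_one_submatrix_id,
      submatrix_submatrix]
    rfl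
  calc ‖A.submatrix f g‖ ≤ ‖Pᴴ‖ * ‖A‖ * ‖Q‖ := by
        rw [hA]
        exact (l2_opNorm_mul _ _).trans
          (mul_le_mul_of_nonneg_right (l2_opNorm_mul _ _) (norm_nonneg _))
    _ ≤ 1 * ‖A‖ * 1 := by
        rw [l2_opNorm_conjTranspose]
        gcongr
        exacts [l2_opNorm_one_submatrix_id_le hf, l2_opNorm_one_submatrix_id_le hg]
    _ = ‖A‖ := by ring

lemma l2_opNorm_reindex [DecidableEq m] [DecidableEq n] (e : m ≃ n) (A : Matrix m m 𝕜) :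
    ‖reindex e e A‖ = ‖A‖ := by
  refine le_antisymm (l2_opNorm_submatrix_le A e.symm.injective e.symm.injective) ?_
  simpa using l2_opNorm_submatrix_le (reindex e e A) e.injective e.injective

lemma l2_opNorm_one_kronecker_le [DecidableEq m] [DecidableEq n] (B : Matrix n n 𝕜) :
    ‖(1 : Matrix m m 𝕜) ⊗ₖ B‖ ≤ ‖B‖ := by
  rw [← l2_opNorm_toEuclideanCLM]
  refine ContinuousLinearMap.opNorm_le_bound _ (norm_nonneg _) fun x ↦ ?_
  let slice (i : m) : EuclideanSpace 𝕜 n := WithLp.toLp 2 fun j ↦ x (i, j)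
  have hx : ‖x‖ ^ 2 = ∑ i, ‖slice i‖ ^ 2 := by
    simp [x.norm_sq_eq, EuclideanSpace.norm_sq_eq, slice, Fintype.sum_prod_type]
  have hy : ‖toEuclideanCLM (𝕜 := 𝕜) ((1 : Matrix m m 𝕜) ⊗ₖ B) x‖ ^ 2 =
      ∑ i, ‖toEuclideanCLM (𝕜 := 𝕜) B (slice i)‖ ^ 2 := by
    simp [EuclideanSpace.norm_sq_eq, slice, Fintype.sum_prod_type, mulVec, dotProduct, one_apply,
      ite_mul]
  refine (sq_le_sq₀ (by positivity) (by positivity)).mp ?_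
  rw [hy, mul_pow, hx, Finset.mul_sum]
  gcongr with i
  rw [← mul_pow]
  gcongr
  exact (toEuclideanCLM (𝕜 := 𝕜) B).le_opNorm _

lemma l2_opNorm_kronecker_le [DecidableEq m] [DecidableEq n] (A : Matrix m m 𝕜)
    (B : Matrix n n 𝕜) : ‖A ⊗ₖ B‖ ≤ ‖A‖ * ‖B‖ := by
  have hA : A ⊗ₖ (1 : Matrix n n 𝕜) =
      reindex (Equiv.prodComm n m) (Equiv.prodComm n m) ((1 : Matrix n n 𝕜) ⊗ₖ A) := by
    ext ⟨i, j⟩ ⟨k, l⟩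
    simp [one_apply, mul_comm]
  calc ‖A ⊗ₖ B‖ = ‖(A ⊗ₖ (1 : Matrix n n 𝕜)) * ((1 : Matrix m m 𝕜) ⊗ₖ B)‖ := by
        rw [← mul_kronecker_mul, Matrix.mul_one, Matrix.one_mul]
    _ ≤ ‖A‖ * ‖B‖ := by
        refine (l2_opNorm_mul _ _).trans ?_
        rw [hA, l2_opNorm_reindex]
        gcongr <;> exact l2_opNorm_one_kronecker_le _

lemma l2_opNorm_kronecker_sub_smul_le [DecidableEq m] [DecidableEq n]
    {A X : Matrix m m 𝕜} {B Y : Matrix n n 𝕜} {α β ε₁ ε₂ : ℝ} (hα : 0 ≤ α) (hβ : 0 ≤ β)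
    (hX : ‖X‖ ≤ 1) (hY : ‖Y‖ ≤ 1) (hA : ‖A - (α : 𝕜) • X‖ ≤ ε₁) (hB : ‖B - (β : 𝕜) • Y‖ ≤ ε₂) :
    ‖A ⊗ₖ B - ((α * β : ℝ) : 𝕜) • (X ⊗ₖ Y)‖ ≤ α * ε₂ + β * ε₁ + ε₁ * ε₂ := by
  have hnormA : ‖A‖ ≤ ε₁ + α :=
    calc ‖A‖ = ‖(A - (α : 𝕜) • X) + (α : 𝕜) • X‖ := by rw [sub_add_cancel]
      _ ≤ ε₁ + α * 1 := by
        grw [norm_add_le, norm_smul, RCLike.norm_ofReal, abs_of_nonneg hα, hA, hX]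
      _ = ε₁ + α := by ring
  have hnormβY : ‖(β : 𝕜) • Y‖ ≤ β := by
    grw [norm_smul, RCLike.norm_ofReal, abs_of_nonneg hβ, hY, mul_one]
  have hsplit : A ⊗ₖ B - ((α * β : ℝ) : 𝕜) • (X ⊗ₖ Y) =
      A ⊗ₖ (B - (β : 𝕜) • Y) + (A - (α : 𝕜) • X) ⊗ₖ ((β : 𝕜) • Y) := by
    ext
    simp only [sub_apply, add_apply, smul_apply, kroneckerMap_apply, smul_eq_mul,
      RCLike.ofReal_mul]
    ring
  calc _ ≤ ‖A‖ * ‖B - (β : 𝕜) • Y‖ + ‖A - (α : 𝕜) • X‖ * ‖(β : 𝕜) • Y‖ := by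
        rw [hsplit]
        exact (norm_add_le _ _).trans
          (add_le_add (l2_opNorm_kronecker_le _ _) (l2_opNorm_kronecker_le _ _))
    _ ≤ (ε₁ + α) * ε₂ + ε₁ * β := by
        gcongr
        · exact (norm_nonneg _).trans hnormA
        · exact (norm_nonneg _).trans hA
    _ = α * ε₂ + β * ε₁ + ε₁ * ε₂ := by ring

end Matrix

lemma l2_opNorm_leadBlock_le {N M : ℕ} (h : M ≤ N) (U : Matrix (Fin N) (Fin N) ℂ) :
    ‖leadBlock h U‖ ≤ ‖U‖ :=
  l2_opNorm_submatrix_le U (Fin.castLE_injective h) (Fin.castLE_injective h)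

/- `finProdFinEquiv` makes its first factor the most significant digit, so this reads an index as
the digits (ancilla of `U`, ancilla of `V`, system of `U`, system of `V`); the leading block is
where both ancilla digits vanish. -/
def kronIndexEquiv (a s b t : ℕ) :
    Fin (2 ^ (a + b + (s + t))) ≃ Fin (2 ^ (a + s)) × Fin (2 ^ (b + t)) :=
  (finCongr (by ring)).trans <| finProdFinEquiv.symm.trans <|
    (Equiv.prodCongr finProdFinEquiv.symm finProdFinEquiv.symm).trans <|
    (Equiv.prodProdProdComm _ _ _ _).trans <|
    Equiv.prodCongr (finProdFinEquiv.trans (finCongr (pow_add 2 a s).symm))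
      (finProdFinEquiv.trans (finCongr (pow_add 2 b t).symm))

lemma kronIndexEquiv_castLE (a s b t : ℕ) (i : Fin (2 ^ (s + t))) :
    kronIndexEquiv a s b t (Fin.castLE (twoPowLe (a + b) (s + t)) i) =
      let j := finProdFinEquiv.symm (finCongr (pow_add 2 s t) i)
      (Fin.castLE (twoPowLe a s) j.1, Fin.castLE (twoPowLe b t) j.2) := by
  have hi : (i : ℕ) < 2 ^ s * 2 ^ t := i.isLt.trans_eq (pow_add 2 s t)
  ext <;> simp [kronIndexEquiv, finProdFinEquiv, Fin.divNat, Fin.modNat, Nat.div_eq_of_lt hi,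
    Nat.mod_eq_of_lt hi]

lemma two_pow_mul_two_pow (a s b t : ℕ) : 2 ^ (a + s) * 2 ^ (b + t) = 2 ^ (a + b + (s + t)) := by
  ring

def kronPerm (a s b t : ℕ) : Equiv.Perm (Fin (2 ^ (a + b + (s + t)))) :=
  (kronIndexEquiv a s b t).trans <| finProdFinEquiv.trans <| finCongr <| two_pow_mul_two_pow a s b t

lemma castSq_kron {N M K : ℕ} (h : N * M = K) (A : Matrix (Fin N) (Fin N) ℂ)
    (B : Matrix (Fin M) (Fin M) ℂ) :
    castSq h (kron A B) =
      reindex (finProdFinEquiv.trans (finCongr h)) (finProdFinEquiv.trans (finCongr h)) (A ⊗ₖ B) :=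
  rfl

lemma permMatrix_kronPerm_conj (a s b t : ℕ) (h : 2 ^ (a + s) * 2 ^ (b + t) = 2 ^ (a + b + (s + t)))
    (U : Matrix (Fin (2 ^ (a + s))) (Fin (2 ^ (a + s))) ℂ)
    (V : Matrix (Fin (2 ^ (b + t))) (Fin (2 ^ (b + t))) ℂ) :
    (kronPerm a s b t).permMatrix ℂ * castSq h (kron U V) * ((kronPerm a s b t).permMatrix ℂ)ᴴ =
      reindex (kronIndexEquiv a s b t).symm (kronIndexEquiv a s b t).symm (U ⊗ₖ V) := by
  rw [permMatrix_mul_mul_conjTranspose, castSq_kron]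
  ext i j
  simp [kronPerm]

lemma leadBlock_reindex_kronIndexEquiv (a s b t : ℕ)
    (U : Matrix (Fin (2 ^ (a + s))) (Fin (2 ^ (a + s))) ℂ)
    (V : Matrix (Fin (2 ^ (b + t))) (Fin (2 ^ (b + t))) ℂ) :
    leadBlock (twoPowLe (a + b) (s + t))
        (reindex (kronIndexEquiv a s b t).symm (kronIndexEquiv a s b t).symm (U ⊗ₖ V)) =
      castSq (pow_add 2 s t).symm
        (kron (leadBlock (twoPowLe a s) U) (leadBlock (twoPowLe b t) V)) := by
  ext i j
  simp [leadBlock, castSq_kron, kronIndexEquiv_castLE]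

lemma specNorm_castSq_kron_sub_smul {N M K : ℕ} (h : N * M = K) (A X : Matrix (Fin N) (Fin N) ℂ)
    (B Y : Matrix (Fin M) (Fin M) ℂ) (c : ℂ) :
    specNorm (castSq h (kron A B) - c • castSq h (kron X Y)) = ‖A ⊗ₖ B - c • X ⊗ₖ Y‖ := by
  have hreindex : castSq h (kron A B) - c • castSq h (kron X Y) =
      reindex (finProdFinEquiv.trans (finCongr h)) (finProdFinEquiv.trans (finCongr h))
        (A ⊗ₖ B - c • X ⊗ₖ Y) := rfl
  rw [hreindex, specNorm, l2_opNorm_toEuclideanCLM, l2_opNorm_reindex]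

/-- Kronecker products of block-encodings (Lemma 1). There is a permutation
matrix `S` of size `2^(n+m)`, depending only on the dimensions `a, s, b, t`, such that for
every unitary `(α, a, ε₁)`-block-encoding `U` of `A` and every unitary
`(β, b, ε₂)`-block-encoding `V` of `B`, the matrix `S (U ⊗ V) S†` is an
`(αβ, a + b, αε₂ + βε₁ + ε₁ε₂)`-block-encoding of `A ⊗ B`. -/
theorem kron_blockEncoding (a s b t : ℕ) (α β ε₁ ε₂ : ℝ) (hα : 0 ≤ α) (hβ : 0 ≤ β) :
    ∃ S : Matrix (Fin (2 ^ (a + b + (s + t)))) (Fin (2 ^ (a + b + (s + t)))) ℂ,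
      IsPermMatrix S ∧
      ∀ (U : Matrix (Fin (2 ^ (a + s))) (Fin (2 ^ (a + s))) ℂ)
        (V : Matrix (Fin (2 ^ (b + t))) (Fin (2 ^ (b + t))) ℂ)
        (A : Matrix (Fin (2 ^ s)) (Fin (2 ^ s)) ℂ)
        (B : Matrix (Fin (2 ^ t)) (Fin (2 ^ t)) ℂ),
        IsBlockEncoding a s α ε₁ U A →
        IsBlockEncoding b t β ε₂ V B →
        IsBlockEncoding (a + b) (s + t) (α * β) (α * ε₂ + β * ε₁ + ε₁ * ε₂)
          (S * castSq (by rw [← pow_add]; congr 1; omega) (kron U V) * Sᴴ)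
          (castSq (pow_add 2 s t).symm (kron A B)) := by
  refine ⟨(kronPerm a s b t).permMatrix ℂ, ⟨_, rfl⟩, fun U V A B ⟨hU, hUA⟩ ⟨hV, hVB⟩ ↦ ?_⟩
  rw [permMatrix_kronPerm_conj]
  refine ⟨reindex_mem_unitaryGroup _ (kronecker_mem_unitary hU hV), ?_⟩
  rw [leadBlock_reindex_kronIndexEquiv, specNorm_castSq_kron_sub_smul]
  exact l2_opNorm_kronecker_sub_smul_le hα hβ
    ((l2_opNorm_leadBlock_le _ U).trans (l2_opNorm_le_one_of_mem_unitaryGroup hU))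
    ((l2_opNorm_leadBlock_le _ V).trans (l2_opNorm_le_one_of_mem_unitaryGroup hV)) hUA hVB
end

section
/- Let d ≥ 1 and, for i = 1, …, d, let n_i = a_i + s_i and let U_i be a 2^{n_i} × 2^{n_i} complex unitary matrix that is an (α_i, a_i, ε_i)-block-encoding of a 2^{s_i} × 2^{s_i} complex matrix A_i. Set n = Σ_i n_i, a = Σ_i a_i, s = Σ_i s_i. Then there exists a permutation matrix S of size 2^n × 2^n, depending only on the dimensions a_1, s_1, …, a_d, s_d, such that S (U_1 ⊗ U_2 ⊗ ⋯ ⊗ U_d) S† is a (∏_i α_i, a, ε)-block-encoding of A_1 ⊗ A_2 ⊗ ⋯ ⊗ A_d with ε = ∏_i (α_i + ε_i) − ∏_i α_i; in particular ε ≤ Σ_i ε_i ∏_{k ≠ i} (α_k + ε_k). -/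
open scoped Kronecker
open Matrix

/-- The iterated (flattened) Kronecker product `A 0 ⊗ A 1 ⊗ ⋯ ⊗ A (d-1)`. -/
noncomputable def kronProd : (d : ℕ) → (N : Fin d → ℕ) →
    ((i : Fin d) → Matrix (Fin (N i)) (Fin (N i)) ℂ) →
    Matrix (Fin (∏ i, N i)) (Fin (∏ i, N i)) ℂ
  | 0, _, _ => castSq (by simp) (1 : Matrix (Fin 1) (Fin 1) ℂ)
  | d + 1, N, A =>
      castSq (Fin.prod_univ_succ N).symm
        (kron (A 0) (kronProd d (fun i => N i.succ) (fun i => A i.succ)))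

open scoped Matrix.Norms.L2Operator

/-!
Conjugating by a permutation matrix only relabels indices, so one can choose `S` sending the
first `2 ^ s` indices to those indices of `U 1 ⊗ ⋯ ⊗ U d` whose ancilla components all vanish.
The leading block of `S (U 1 ⊗ ⋯ ⊗ U d) S†` is then the Kronecker product of the leading blocks
`Ã i` of the factors. With `B i = α i • Ã i` we have `‖A i - B i‖ ≤ ε i` and `‖B i‖ ≤ α i`
(a block of a unitary is a contraction), and peeling off one factor at a time,
`A 1 ⊗ A' - B 1 ⊗ B' = (A 1 - B 1) ⊗ A' + B 1 ⊗ (A' - B')`, together with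
`‖X ⊗ Y‖ ≤ ‖X‖ ‖Y‖` gives `‖⊗ A - ⊗ B‖ ≤ ∏ (α i + ε i) - ∏ α i`.
-/

lemma Finset.prod_add_sub_prod_le_sum {ι R : Type*} [LinearOrder ι] [CommRing R] [PartialOrder R]
    [IsOrderedRing R] (s : Finset ι) {f g : ι → R} (hf : ∀ i ∈ s, 0 ≤ f i)
    (hg : ∀ i ∈ s, 0 ≤ g i) :
    ∏ i ∈ s, (f i + g i) - ∏ i ∈ s, f i ≤ ∑ i ∈ s, g i * ∏ j ∈ s.erase i, (f j + g j) := by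
  rw [prod_add_ordered, add_sub_cancel_left]
  refine sum_le_sum fun i hi => ?_
  have hsplit : ∏ j ∈ s.erase i, (f j + g j)
      = (∏ j ∈ s with j < i, (f j + g j)) * ∏ j ∈ s with i < j, (f j + g j) := by
    rw [← prod_union (disjoint_filter.2 fun j _ h h' => lt_asymm h h')]
    congr 1
    ext j
    simp only [mem_erase, mem_union, mem_filter]
    constructor
    · rintro ⟨hji, hj⟩; exact (lt_or_gt_of_ne hji).imp (⟨hj, ·⟩) (⟨hj, ·⟩)
    · rintro (⟨hj, h⟩ | ⟨hj, h⟩) <;> exact ⟨by rintro rfl; exact lt_irrefl _ h, hj⟩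
  have hfg : ∀ j ∈ s, 0 ≤ f j + g j := fun j hj => add_nonneg (hf j hj) (hg j hj)
  rw [hsplit, mul_assoc]
  gcongr with j hj
  · exact hg i hi
  · exact prod_nonneg fun j hj => hfg j (mem_filter.1 hj).1
  · exact fun j hj => hf j (mem_filter.1 hj).1
  · exact le_add_of_nonneg_right (hg j (mem_filter.1 hj).1)

section L2OpNorm

variable {𝕜 : Type*} [RCLike 𝕜] {l m n o : Type*}
  [Fintype l] [Fintype m] [Fintype n] [Fintype o]
  [DecidableEq l] [DecidableEq m] [DecidableEq n] [DecidableEq o]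

lemma Matrix.l2_opNorm_one_le_s3 : ‖(1 : Matrix n n 𝕜)‖ ≤ 1 := by
  simpa using permMatrix_l2_opNorm_le (𝕜 := 𝕜) (1 : Equiv.Perm n)

lemma Matrix.l2_opNorm_le_one_of_mem_unitaryGroup_s3 {U : Matrix n n 𝕜}
    (hU : U ∈ unitaryGroup n 𝕜) : ‖U‖ ≤ 1 := by
  rw [← Matrix.mul_one U, CStarRing.norm_mem_unitary_mul _ hU]
  exact l2_opNorm_one_le_s3

lemma Matrix.l2_opNorm_one_submatrix_le {f : l → m} (hf : f.Injective) :
    ‖(1 : Matrix m m 𝕜).submatrix f id‖ ≤ 1 := by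
  set P := (1 : Matrix m m 𝕜).submatrix f id
  have hP : P * Pᴴ = 1 := by
    rw [conjTranspose_submatrix, conjTranspose_one,
      ← submatrix_mul _ _ _ _ _ Function.bijective_id, Matrix.mul_one, submatrix_one _ hf]
  have : ‖P‖ * ‖P‖ ≤ 1 := by
    rw [← l2_opNorm_conjTranspose P, ← l2_opNorm_conjTranspose_mul_self,
      conjTranspose_conjTranspose, hP]
    exact l2_opNorm_one_le_s3
  nlinarith [norm_nonneg P]

lemma Matrix.l2_opNorm_submatrix_le_s3 (A : Matrix m n 𝕜) {f : l → m} {g : o → n}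
    (hf : f.Injective) (hg : g.Injective) : ‖A.submatrix f g‖ ≤ ‖A‖ := by
  have hA : A.submatrix f g
      = (1 : Matrix m m 𝕜).submatrix f id * A * ((1 : Matrix n n 𝕜).submatrix g id)ᴴ := by
    ext i j; simp [mul_apply, one_apply]
  calc ‖A.submatrix f g‖
      ≤ ‖(1 : Matrix m m 𝕜).submatrix f id‖ * ‖A‖ * ‖((1 : Matrix n n 𝕜).submatrix g id)ᴴ‖ := by
        rw [hA]; exact (l2_opNorm_mul _ _).trans (by gcongr; exact l2_opNorm_mul _ _)
    _ ≤ 1 * ‖A‖ * 1 := by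
        rw [l2_opNorm_conjTranspose]
        gcongr
        exacts [l2_opNorm_one_submatrix_le hf, l2_opNorm_one_submatrix_le hg]
    _ = ‖A‖ := by ring

def Matrix.kroneckerOneStarAlgHom : Matrix m m ℂ →⋆ₐ[ℂ] Matrix (m × n) (m × n) ℂ where
  toFun A := A ⊗ₖ 1
  map_one' := one_kronecker_one
  map_mul' A B := by rw [← mul_kronecker_mul, Matrix.mul_one]
  map_zero' := zero_kronecker _
  map_add' A B := add_kronecker _ _ _
  commutes' r := by simp [Algebra.algebraMap_eq_smul_one, smul_kronecker]
  map_star' A := by simp [star_eq_conjTranspose, conjTranspose_kronecker]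

lemma Matrix.l2_opNorm_kronecker_le_s3 (A : Matrix m m ℂ) (B : Matrix n n ℂ) :
    ‖A ⊗ₖ B‖ ≤ ‖A‖ * ‖B‖ := by
  have hB : (1 : Matrix m m ℂ) ⊗ₖ B = (B ⊗ₖ 1).submatrix Prod.swap Prod.swap := by
    ext ⟨i, j⟩ ⟨k, l⟩; simp [mul_comm]
  calc ‖A ⊗ₖ B‖ = ‖(A ⊗ₖ 1) * ((1 : Matrix m m ℂ) ⊗ₖ B)‖ := by
        rw [← mul_kronecker_mul, Matrix.mul_one, Matrix.one_mul]
    _ ≤ ‖A ⊗ₖ (1 : Matrix n n ℂ)‖ * ‖(1 : Matrix m m ℂ) ⊗ₖ B‖ := l2_opNorm_mul _ _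
    _ ≤ ‖A‖ * ‖B‖ := by
        gcongr
        · exact NonUnitalStarAlgHom.norm_apply_le (kroneckerOneStarAlgHom (n := n)) A
        · rw [hB]
          exact (l2_opNorm_submatrix_le_s3 _ Prod.swap_injective Prod.swap_injective).trans
            (NonUnitalStarAlgHom.norm_apply_le (kroneckerOneStarAlgHom (n := m)) B)

lemma Matrix.submatrix_equiv_mem_unitaryGroup {m n α : Type*} [Fintype m] [Fintype n]
    [DecidableEq m] [DecidableEq n] [CommRing α] [StarRing α] {U : Matrix n n α} (e : m ≃ n)
    (hU : U ∈ unitaryGroup n α) : U.submatrix e e ∈ unitaryGroup m α := by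
  rw [mem_unitaryGroup_iff, star_eq_conjTranspose, conjTranspose_submatrix, submatrix_mul_equiv,
    ← star_eq_conjTranspose, hU.2, submatrix_one_equiv]

lemma Matrix.permMatrix_mul_mul_conjTranspose_s3 {n R : Type*} [Fintype n] [DecidableEq n]
    [NonAssocSemiring R] [StarRing R] (e : Equiv.Perm n) (X : Matrix n n R) :
    e.permMatrix R * X * (e.permMatrix R)ᴴ = X.submatrix e e := by
  rw [conjTranspose_permMatrix, PEquiv.toMatrix_toPEquiv_mul, PEquiv.mul_toMatrix_toPEquiv,
    submatrix_submatrix]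
  rfl

lemma exists_perm_leadBlock_conj_eq_submatrix {M N : ℕ} (h : M ≤ N) {g : Fin M → Fin N}
    (hg : g.Injective) : ∃ e : Equiv.Perm (Fin N), ∀ X : Matrix (Fin N) (Fin N) ℂ,
      leadBlock h (e.permMatrix ℂ * X * (e.permMatrix ℂ)ᴴ) = X.submatrix g g := by
  obtain ⟨e, he⟩ := Equiv.Perm.exists_extending_pair _ _ (Fin.castLE_injective h) hg
  refine ⟨e, fun X => ?_⟩
  rw [permMatrix_mul_mul_conjTranspose_s3]
  ext i j
  simp [leadBlock, he]

lemma specNorm_eq_norm {n : Type*} [Fintype n] [DecidableEq n] (A : Matrix n n ℂ) :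
    specNorm A = ‖A‖ := rfl

lemma castSq_sub {N M : ℕ} (h : N = M) (A B : Matrix (Fin N) (Fin N) ℂ) :
    castSq h (A - B) = castSq h A - castSq h B := by
  subst h; rfl

lemma castSq_smul {N M : ℕ} (h : N = M) (r : ℂ) (A : Matrix (Fin N) (Fin N) ℂ) :
    castSq h (r • A) = r • castSq h A := by
  subst h; rfl

lemma norm_castSq {N M : ℕ} (h : N = M) (A : Matrix (Fin N) (Fin N) ℂ) :
    ‖castSq h A‖ = ‖A‖ := by
  subst h; rfl

lemma castSq_mem_unitaryGroup {N M : ℕ} (h : N = M) {U : Matrix (Fin N) (Fin N) ℂ}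
    (hU : U ∈ unitaryGroup (Fin N) ℂ) : castSq h U ∈ unitaryGroup (Fin M) ℂ := by
  subst h; exact hU

section Kron

variable {N M : ℕ}

lemma norm_kron_le (A : Matrix (Fin N) (Fin N) ℂ) (B : Matrix (Fin M) (Fin M) ℂ) :
    ‖kron A B‖ ≤ ‖A‖ * ‖B‖ :=
  (l2_opNorm_submatrix_le_s3 _ finProdFinEquiv.symm.injective finProdFinEquiv.symm.injective).trans
    (l2_opNorm_kronecker_le_s3 A B)

lemma kron_sub_left (A B : Matrix (Fin N) (Fin N) ℂ) (C : Matrix (Fin M) (Fin M) ℂ) :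
    kron (A - B) C = kron A C - kron B C := by
  ext; simp [kron, sub_mul]

lemma kron_sub_right (A : Matrix (Fin N) (Fin N) ℂ) (B C : Matrix (Fin M) (Fin M) ℂ) :
    kron A (B - C) = kron A B - kron A C := by
  ext; simp [kron, mul_sub]

lemma kron_smul_smul (r t : ℂ) (A : Matrix (Fin N) (Fin N) ℂ) (B : Matrix (Fin M) (Fin M) ℂ) :
    kron (r • A) (t • B) = (r * t) • kron A B := by
  ext; simp [kron]; ring

lemma kron_mem_unitaryGroup {U : Matrix (Fin N) (Fin N) ℂ} {V : Matrix (Fin M) (Fin M) ℂ}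
    (hU : U ∈ unitaryGroup (Fin N) ℂ) (hV : V ∈ unitaryGroup (Fin M) ℂ) :
    kron U V ∈ unitaryGroup (Fin (N * M)) ℂ :=
  submatrix_equiv_mem_unitaryGroup _ (kronecker_mem_unitary hU hV)

lemma norm_kron_sub_kron_le (A B : Matrix (Fin N) (Fin N) ℂ)
    (A' B' : Matrix (Fin M) (Fin M) ℂ) :
    ‖kron A A' - kron B B'‖ ≤ ‖A - B‖ * ‖A'‖ + ‖B‖ * ‖A' - B'‖ := by
  have h : kron A A' - kron B B' = kron (A - B) A' + kron B (A' - B') := by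
    rw [kron_sub_left, kron_sub_right]; abel
  rw [h]
  exact (norm_add_le _ _).trans (add_le_add (norm_kron_le _ _) (norm_kron_le _ _))

section KronProd

variable {d : ℕ} {N : Fin d → ℕ}

lemma kronProd_mem_unitaryGroup {U : (i : Fin d) → Matrix (Fin (N i)) (Fin (N i)) ℂ}
    (hU : ∀ i, U i ∈ unitaryGroup (Fin (N i)) ℂ) :
    kronProd d N U ∈ unitaryGroup (Fin (∏ i, N i)) ℂ := by
  induction d with
  | zero => exact castSq_mem_unitaryGroup _ (one_mem _)
  | succ d ih =>
    exact castSq_mem_unitaryGroup _ (kron_mem_unitaryGroup (hU 0) (ih fun i => hU i.succ))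

lemma kronProd_smul (r : Fin d → ℂ) (A : (i : Fin d) → Matrix (Fin (N i)) (Fin (N i)) ℂ) :
    kronProd d N (fun i => r i • A i) = (∏ i, r i) • kronProd d N A := by
  induction d with
  | zero => simp [kronProd]
  | succ d ih =>
    rw [kronProd, kronProd, ih, kron_smul_smul, castSq_smul, ← Fin.prod_univ_succ r]

lemma norm_kronProd_le {A : (i : Fin d) → Matrix (Fin (N i)) (Fin (N i)) ℂ} {c : Fin d → ℝ}
    (hA : ∀ i, ‖A i‖ ≤ c i) : ‖kronProd d N A‖ ≤ ∏ i, c i := by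
  induction d with
  | zero => simp [kronProd, norm_castSq]
  | succ d ih =>
    rw [kronProd, norm_castSq, Fin.prod_univ_succ]
    exact (norm_kron_le _ _).trans
      (mul_le_mul (hA 0) (ih fun i => hA i.succ) (norm_nonneg _) ((norm_nonneg _).trans (hA 0)))

lemma norm_kronProd_sub_kronProd_le {A B : (i : Fin d) → Matrix (Fin (N i)) (Fin (N i)) ℂ}
    {ε c : Fin d → ℝ} (hAB : ∀ i, ‖A i - B i‖ ≤ ε i) (hB : ∀ i, ‖B i‖ ≤ c i) :
    ‖kronProd d N A - kronProd d N B‖ ≤ ∏ i, (c i + ε i) - ∏ i, c i := by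
  induction d with
  | zero => simp [kronProd]
  | succ d ih =>
    have hA : ∀ i, ‖A i‖ ≤ c i + ε i := fun i =>
      (norm_le_norm_add_norm_sub' (A i) (B i)).trans (add_le_add (hB i) (hAB i))
    rw [kronProd, kronProd, ← castSq_sub, norm_castSq, Fin.prod_univ_succ, Fin.prod_univ_succ]
    calc _ ≤ ‖A 0 - B 0‖ * ‖kronProd d _ fun i => A i.succ‖
          + ‖B 0‖ * ‖(kronProd d _ fun i => A i.succ) - kronProd d _ fun i => B i.succ‖ :=
          norm_kron_sub_kron_le _ _ _ _
      _ ≤ ε 0 * ∏ i : Fin d, (c i.succ + ε i.succ)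
          + c 0 * (∏ i : Fin d, (c i.succ + ε i.succ) - ∏ i : Fin d, c i.succ) :=
          add_le_add
            (mul_le_mul (hAB 0) (norm_kronProd_le fun i => hA i.succ) (norm_nonneg _)
              ((norm_nonneg _).trans (hAB 0)))
            (mul_le_mul (hB 0) (ih (fun i => hAB i.succ) fun i => hB i.succ) (norm_nonneg _)
              ((norm_nonneg _).trans (hB 0)))
      _ = _ := by ring

def kronProdIndexEquiv :
    (d : ℕ) → (N : Fin d → ℕ) → ((i : Fin d) → Fin (N i)) ≃ Fin (∏ i, N i)
  | 0, _ => (Equiv.ofUnique _ (Fin 1)).trans (finCongr (by simp))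
  | d + 1, N =>
    (Fin.consEquiv fun i => Fin (N i)).symm.trans
      ((Equiv.prodCongr (Equiv.refl _) (kronProdIndexEquiv d fun i => N i.succ)).trans
        (finProdFinEquiv.trans (finCongr (Fin.prod_univ_succ N).symm)))

lemma kronProd_apply_kronProdIndexEquiv (A : (i : Fin d) → Matrix (Fin (N i)) (Fin (N i)) ℂ)
    (x y : (i : Fin d) → Fin (N i)) :
    kronProd d N A (kronProdIndexEquiv d N x) (kronProdIndexEquiv d N y)
      = ∏ i, A i (x i) (y i) := by
  induction d with
  | zero => simp [kronProd, kronProdIndexEquiv, castSq]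
  | succ d ih =>
    simp [kronProd, kronProdIndexEquiv, castSq, kron, ih, Fin.prod_univ_succ, Fin.tail]

lemma kronProd_submatrix {M : Fin d → ℕ}
    (B : (i : Fin d) → Matrix (Fin (N i)) (Fin (N i)) ℂ) (f : (i : Fin d) → Fin (M i) → Fin (N i)) :
    kronProd d M (fun i => (B i).submatrix (f i) (f i))
      = (kronProd d N B).submatrix
          (kronProdIndexEquiv d N ∘ Pi.map f ∘ (kronProdIndexEquiv d M).symm)
          (kronProdIndexEquiv d N ∘ Pi.map f ∘ (kronProdIndexEquiv d M).symm) := by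
  ext i j
  obtain ⟨x, rfl⟩ := (kronProdIndexEquiv d M).surjective i
  obtain ⟨y, rfl⟩ := (kronProdIndexEquiv d M).surjective j
  simp [kronProd_apply_kronProdIndexEquiv]

lemma norm_ofReal_smul_leadBlock_le {M N : ℕ} (h : M ≤ N) {U : Matrix (Fin N) (Fin N) ℂ}
    (hU : U ∈ unitaryGroup (Fin N) ℂ) {α : ℝ} (hα : 0 ≤ α) :
    ‖(α : ℂ) • leadBlock h U‖ ≤ α := by
  rw [norm_smul, Complex.norm_real, Real.norm_of_nonneg hα]
  exact mul_le_of_le_one_right hα <| (l2_opNorm_submatrix_le_s3 U (Fin.castLE_injective h)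
    (Fin.castLE_injective h)).trans (l2_opNorm_le_one_of_mem_unitaryGroup_s3 hU)

lemma exists_perm_leadBlock_conj_kronProd {d : ℕ} {M N : Fin d → ℕ} (hMN : ∀ i, M i ≤ N i)
    {m n : ℕ} (hm : ∏ i, M i = m) (hn : ∏ i, N i = n) (h : m ≤ n) :
    ∃ e : Equiv.Perm (Fin n), ∀ U : (i : Fin d) → Matrix (Fin (N i)) (Fin (N i)) ℂ,
      leadBlock h (e.permMatrix ℂ * castSq hn (kronProd d N U) * (e.permMatrix ℂ)ᴴ)
        = castSq hm (kronProd d M fun i => leadBlock (hMN i) (U i)) := by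
  let F := kronProdIndexEquiv d N ∘ Pi.map (fun i => Fin.castLE (hMN i))
    ∘ (kronProdIndexEquiv d M).symm
  have hF : F.Injective := (Equiv.injective _).comp
    ((Function.Injective.piMap fun i => Fin.castLE_injective _).comp (Equiv.injective _))
  obtain ⟨e, he⟩ := exists_perm_leadBlock_conj_eq_submatrix h
    ((finCongr hn).injective.comp (hF.comp (finCongr hm).symm.injective))
  refine ⟨e, fun U => ?_⟩
  rw [he, show (kronProd d M fun i => leadBlock (hMN i) (U i)) = (kronProd d N U).submatrix F F
    from kronProd_submatrix U _]
  rfl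

/-- Kronecker products of `d` block-encodings. There is a permutation matrix
`S`, depending only on the dimensions `a i, s i`, such that whenever each `U i` is an
`(α i, a i, ε i)`-block-encoding of `A i`, the matrix `S (U 1 ⊗ ⋯ ⊗ U d) S†` is a
`(∏ α i, ∑ a i, ε)`-block-encoding of `A 1 ⊗ ⋯ ⊗ A d` with
`ε = ∏ (α i + ε i) − ∏ α i`; in particular `ε ≤ ∑ i, ε i * ∏_{k ≠ i} (α k + ε k)`. -/
theorem kron_blockEncoding_d (d : ℕ) (a s : Fin d → ℕ) (α ε : Fin d → ℝ)
    (hα : ∀ i, 0 ≤ α i) (hε : ∀ i, 0 ≤ ε i) :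
    (∃ S : Matrix (Fin (2 ^ ((∑ i, a i) + ∑ i, s i)))
             (Fin (2 ^ ((∑ i, a i) + ∑ i, s i))) ℂ,
      IsPermMatrix S ∧
      ∀ (U : (i : Fin d) → Matrix (Fin (2 ^ (a i + s i))) (Fin (2 ^ (a i + s i))) ℂ)
        (A : (i : Fin d) → Matrix (Fin (2 ^ (s i))) (Fin (2 ^ (s i))) ℂ),
        (∀ i, IsBlockEncoding (a i) (s i) (α i) (ε i) (U i) (A i)) →
        IsBlockEncoding (∑ i, a i) (∑ i, s i) (∏ i, α i)
          ((∏ i, (α i + ε i)) - ∏ i, α i)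
          (S * castSq (by rw [Finset.prod_pow_eq_pow_sum, Finset.sum_add_distrib])
                 (kronProd d _ U) * Sᴴ)
          (castSq (Finset.prod_pow_eq_pow_sum Finset.univ s 2) (kronProd d _ A))) ∧
    (∏ i, (α i + ε i)) - (∏ i, α i)
      ≤ ∑ i, ε i * ∏ k ∈ Finset.univ.erase i, (α k + ε k) := by
  refine ⟨?_, Finset.prod_add_sub_prod_le_sum _ (fun i _ => hα i) fun i _ => hε i⟩
  obtain ⟨e, he⟩ := exists_perm_leadBlock_conj_kronProd (fun i => twoPowLe (a i) (s i))
    (Finset.prod_pow_eq_pow_sum _ _ _)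
    (by rw [Finset.prod_pow_eq_pow_sum, Finset.sum_add_distrib]) (twoPowLe _ _)
  refine ⟨e.permMatrix ℂ, ⟨e, rfl⟩, fun U A hUA => ⟨?_, ?_⟩⟩
  · rw [permMatrix_mul_mul_conjTranspose_s3]
    exact submatrix_equiv_mem_unitaryGroup e
      (castSq_mem_unitaryGroup _ (kronProd_mem_unitaryGroup fun i => (hUA i).1))
  · rw [he, specNorm_eq_norm, Complex.ofReal_prod, ← castSq_smul, ← kronProd_smul,
      ← castSq_sub, norm_castSq]
    exact norm_kronProd_sub_kronProd_le (fun i => (hUA i).2)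
      fun i => norm_ofReal_smul_leadBlock_le _ (hUA i).1 (hα i)
end KronProd
end Kron
end L2OpNorm
end

section
/- Let m ≤ 2^b, let P and Q be 2^b × 2^b complex unitary matrices with p = P |0⟩^{⊗b} and q = Q |0⟩^{⊗b}, let n = a + s, and for each j ∈ {0, …, m−1} let U^{(j)} be a 2^n × 2^n complex unitary matrix with leading principal 2^s × 2^s block Ã^{(j)} = (⟨0|^{⊗a} ⊗ I_{2^s}) U^{(j)} (|0⟩^{⊗a} ⊗ I_{2^s}). Let W = Σ_{j=0}^{m−1} |j⟩⟨j| ⊗ U^{(j)} + Σ_{j=m}^{2^b−1} |j⟩⟨j| ⊗ I_{2^n} and U = (P† ⊗ I_{2^a} ⊗ I_{2^s}) W (Q ⊗ I_{2^a} ⊗ I_{2^s}). Then the leading principal 2^s × 2^s block of U satisfies (⟨0|^{⊗(a+b)} ⊗ I_{2^s}) U (|0⟩^{⊗(a+b)} ⊗ I_{2^s}) = Σ_{j=0}^{m−1} p_j^* q_j Ã^{(j)} + (Σ_{j=m}^{2^b−1} p_j^* q_j) I_{2^s}. -/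
open scoped Kronecker
open Matrix

/-- Zero-padding of a vector `y ∈ ℂ^m` to a vector in `ℂ^n`, `m ≤ n`. -/
noncomputable def pad {m n : ℕ} (h : m ≤ n) (y : Fin m → ℂ) : Fin n → ℂ :=
  fun j => if hj : (j : ℕ) < m then y ⟨j, hj⟩ else 0

/-- `(P, Q)` is a `(β, b, ε)`-state-preparation-pair for `y ∈ ℂ^m` (`m ≤ 2^b`):
`P` and `Q` are unitary and, with `p = P|0⟩` and `q = Q|0⟩` (the first columns of `P`
and `Q`), `∑ⱼ |β pⱼ* qⱼ − y̲ⱼ| ≤ ε` where `y̲` is the zero-padding of `y`. -/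
def IsStatePrepPair (b m : ℕ) (hm : m ≤ 2 ^ b) (β ε : ℝ) (y : Fin m → ℂ)
    (P Q : Matrix (Fin (2 ^ b)) (Fin (2 ^ b)) ℂ) : Prop :=
  P ∈ Matrix.unitaryGroup (Fin (2 ^ b)) ℂ ∧ Q ∈ Matrix.unitaryGroup (Fin (2 ^ b)) ℂ ∧
    ∑ j : Fin (2 ^ b),
      ‖(β : ℂ) * (starRingEnd ℂ (P j ⟨0, Nat.two_pow_pos b⟩)
        * Q j ⟨0, Nat.two_pow_pos b⟩) - pad hm y j‖ ≤ ε

/-- The select oracle `W = ∑_{j<m} |j⟩⟨j| ⊗ U⁽ʲ⁾ + ∑_{j≥m} |j⟩⟨j| ⊗ I`. -/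
noncomputable def selectOracle (b n m : ℕ) (hm : m ≤ 2 ^ b)
    (U : Fin m → Matrix (Fin (2 ^ n)) (Fin (2 ^ n)) ℂ) :
    Matrix (Fin (2 ^ b * 2 ^ n)) (Fin (2 ^ b * 2 ^ n)) ℂ :=
  ∑ j : Fin (2 ^ b),
    kron (Matrix.single j j 1) (if hj : (j : ℕ) < m then U ⟨j, hj⟩ else 1)


/-
Conjugating the select oracle by `P† ⊗ I` and `Q ⊗ I` and using the mixed-product rule gives
`∑ⱼ (P† |j⟩⟨j| Q) ⊗ U⁽ʲ⁾` (with `U⁽ʲ⁾ = I` for `j ≥ m`). The leading block of a Kronecker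
product `A ⊗ B` is `A₀₀` times the leading block of `B`, and `(P† |j⟩⟨j| Q)₀₀ = pⱼ* qⱼ`;
the leading block of the identity is the identity.
-/

lemma kron_mul {N M : ℕ} (A C : Matrix (Fin N) (Fin N) ℂ) (B D : Matrix (Fin M) (Fin M) ℂ) :
    kron A B * kron C D = kron (A * C) (B * D) := by
  simp only [kron, reindex_apply, submatrix_mul_equiv, mul_kronecker_mul]

lemma conjTranspose_mul_single_mul_apply {ι : Type*} [Fintype ι] [DecidableEq ι]
    (P Q : Matrix ι ι ℂ) (j i k : ι) :
    (Pᴴ * single j j (1 : ℂ) * Q) i k = star (P j i) * Q j k := by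
  simp [mul_apply, single, conjTranspose_apply, ite_and]

section leadBlock

variable {N M : ℕ} (h : M ≤ N)

lemma leadBlock_sum {ι : Type*} (t : Finset ι)
    (U : ι → Matrix (Fin N) (Fin N) ℂ) :
    leadBlock h (∑ j ∈ t, U j) = ∑ j ∈ t, leadBlock h (U j) := by
  ext i k
  simp [leadBlock, Matrix.sum_apply]

lemma leadBlock_one : leadBlock h (1 : Matrix (Fin N) (Fin N) ℂ) = 1 := by
  ext i k
  simp [leadBlock, one_apply, Fin.castLE_inj]

end leadBlock

/-- Row and column indices `< S ≤ K` have quotient `0` by `K`, so only the `(0, 0)` entry of `A`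
is seen. -/
lemma leadBlock_kron {N K S : ℕ} (hN : 0 < N) (hSK : S ≤ K) (h : S ≤ N * K)
    (A : Matrix (Fin N) (Fin N) ℂ) (B : Matrix (Fin K) (Fin K) ℂ) :
    leadBlock h (kron A B) = A ⟨0, hN⟩ ⟨0, hN⟩ • leadBlock hSK B := by
  have hlt (i : Fin S) : (i : ℕ) < K := i.2.trans_le hSK
  ext i k
  simp only [leadBlock, kron, reindex_apply, submatrix_apply, finProdFinEquiv_symm_apply,
    kroneckerMap_apply, of_apply, Matrix.smul_apply, smul_eq_mul]
  congr 2 <;> ext <;> simp [Fin.divNat, Fin.modNat, Nat.div_eq_of_lt (hlt _),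
    Nat.mod_eq_of_lt (hlt _)]

lemma Fin.sum_dite_val_lt {M : Type*} [AddCommMonoid M] {m n : ℕ} (hm : m ≤ n)
    (g : (j : Fin n) → (j : ℕ) < m → M) (f : Fin n → M) :
    ∑ j : Fin n, (if hj : (j : ℕ) < m then g j hj else f j)
      = ∑ i : Fin m, g (Fin.castLE hm i) i.2
        + ∑ j ∈ Finset.univ.filter (fun j : Fin n => m ≤ (j : ℕ)), f j := by
  have hlt : Finset.univ.filter (fun j : Fin n => (j : ℕ) < m)
      = Finset.univ.map (Fin.castLEEmb hm) := by
    ext j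
    simp only [Finset.mem_filter, Finset.mem_univ, true_and, Finset.mem_map, Fin.castLEEmb_apply]
    exact ⟨fun hj => ⟨⟨j, hj⟩, rfl⟩, by rintro ⟨i, rfl⟩; exact i.2⟩
  rw [← Finset.sum_filter_add_sum_filter_not Finset.univ (fun j : Fin n => (j : ℕ) < m), hlt,
    Finset.sum_map]
  congr 1
  · exact Finset.sum_congr rfl fun i _ => dif_pos i.2
  · refine Finset.sum_congr (by simp only [not_lt]) fun j hj => ?_
    simp only [Finset.mem_filter, Finset.mem_univ, true_and] at hj
    exact dif_neg (not_lt.2 hj)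

lemma kron_mul_selectOracle_mul_kron (b n m : ℕ) (hm : m ≤ 2 ^ b)
    (A B : Matrix (Fin (2 ^ b)) (Fin (2 ^ b)) ℂ)
    (U : Fin m → Matrix (Fin (2 ^ n)) (Fin (2 ^ n)) ℂ) :
    kron A 1 * selectOracle b n m hm U * kron B 1
      = ∑ j : Fin (2 ^ b), kron (A * single j j 1 * B)
          (if hj : (j : ℕ) < m then U ⟨j, hj⟩ else 1) := by
  rw [selectOracle, Finset.mul_sum, Finset.sum_mul]
  refine Finset.sum_congr rfl fun j _ => ?_
  rw [kron_mul, kron_mul, one_mul, mul_one]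

theorem lcu_leadBlock_general (b m a s : ℕ) (hm : m ≤ 2 ^ b)
    (P Q : Matrix (Fin (2 ^ b)) (Fin (2 ^ b)) ℂ)
    (U : Fin m → Matrix (Fin (2 ^ (a + s))) (Fin (2 ^ (a + s))) ℂ) :
    leadBlock
      (le_trans (twoPowLe a s) (Nat.le_mul_of_pos_left _ (Nat.two_pow_pos b)))
      (kron Pᴴ (1 : Matrix (Fin (2 ^ (a + s))) (Fin (2 ^ (a + s))) ℂ)
        * selectOracle b (a + s) m hm U
        * kron Q (1 : Matrix (Fin (2 ^ (a + s))) (Fin (2 ^ (a + s))) ℂ))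
    = (∑ j : Fin m,
        (starRingEnd ℂ (P (Fin.castLE hm j) ⟨0, Nat.two_pow_pos b⟩)
          * Q (Fin.castLE hm j) ⟨0, Nat.two_pow_pos b⟩) • leadBlock (twoPowLe a s) (U j))
      + (∑ j ∈ Finset.univ.filter (fun j : Fin (2 ^ b) => m ≤ (j : ℕ)),
          starRingEnd ℂ (P j ⟨0, Nat.two_pow_pos b⟩) * Q j ⟨0, Nat.two_pow_pos b⟩)
        • (1 : Matrix (Fin (2 ^ s)) (Fin (2 ^ s)) ℂ) := by
  rw [kron_mul_selectOracle_mul_kron, leadBlock_sum]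
  simp only [leadBlock_kron (Nat.two_pow_pos b) (twoPowLe a s),
    conjTranspose_mul_single_mul_apply, apply_dite (leadBlock (twoPowLe a s)), leadBlock_one,
    smul_dite]
  rw [Fin.sum_dite_val_lt hm, Finset.sum_smul]
  rfl

/-- the leading block of
`U = (P† ⊗ I)(∑ⱼ |j⟩⟨j| ⊗ U⁽ʲ⁾ + ∑_{j≥m} |j⟩⟨j| ⊗ I)(Q ⊗ I)` equals
`∑_{j<m} pⱼ* qⱼ Ã⁽ʲ⁾ + (∑_{j≥m} pⱼ* qⱼ) I`, where `p = P|0⟩`, `q = Q|0⟩` and `Ã⁽ʲ⁾` is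
the leading block of `U⁽ʲ⁾`. -/
theorem lcu_leadBlock (b m a s : ℕ) (hm : m ≤ 2 ^ b)
    (P Q : Matrix (Fin (2 ^ b)) (Fin (2 ^ b)) ℂ)
    (hP : P ∈ Matrix.unitaryGroup (Fin (2 ^ b)) ℂ)
    (hQ : Q ∈ Matrix.unitaryGroup (Fin (2 ^ b)) ℂ)
    (U : Fin m → Matrix (Fin (2 ^ (a + s))) (Fin (2 ^ (a + s))) ℂ)
    (hU : ∀ j, U j ∈ Matrix.unitaryGroup (Fin (2 ^ (a + s))) ℂ) :
    leadBlock
      (le_trans (twoPowLe a s) (Nat.le_mul_of_pos_left _ (Nat.two_pow_pos b)))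
      (kron Pᴴ (1 : Matrix (Fin (2 ^ (a + s))) (Fin (2 ^ (a + s))) ℂ)
        * selectOracle b (a + s) m hm U
        * kron Q (1 : Matrix (Fin (2 ^ (a + s))) (Fin (2 ^ (a + s))) ℂ))
    = (∑ j : Fin m,
        (starRingEnd ℂ (P (Fin.castLE hm j) ⟨0, Nat.two_pow_pos b⟩)
          * Q (Fin.castLE hm j) ⟨0, Nat.two_pow_pos b⟩) • leadBlock (twoPowLe a s) (U j))
      + (∑ j ∈ Finset.univ.filter (fun j : Fin (2 ^ b) => m ≤ (j : ℕ)),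
          starRingEnd ℂ (P j ⟨0, Nat.two_pow_pos b⟩) * Q j ⟨0, Nat.two_pow_pos b⟩)
        • (1 : Matrix (Fin (2 ^ s)) (Fin (2 ^ s)) ℂ) :=
  lcu_leadBlock_general b m a s hm P Q U
end

section
/- Let A be an N × N complex matrix with spectral norm ‖A‖ ≤ 1. Then there exists a 2N × 2N complex unitary matrix U whose leading principal N × N block equals A; that is, every N × N complex matrix A with ‖A‖ ≤ 1 admits a unitary dilation of size 2N, so every nonzero complex matrix A can be embedded in a (‖A‖, 1, 0)-block-encoding. -/
open scoped Kronecker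
open Matrix

/-! The Halmos dilation `U = [[A, √(1 - A Aᴴ)], [√(1 - Aᴴ A), -Aᴴ]]` works. Its blocks satisfy
`U Uᴴ = 1` once `A √(1 - Aᴴ A) = √(1 - A Aᴴ) A`; this intertwining follows from the obvious
`A (1 - Aᴴ A) = (1 - A Aᴴ) A` because a matrix has finite spectrum, so its square root is a
polynomial in it (Lagrange interpolation on the union of both spectra). -/

open Polynomial in
theorem SemiconjBy.aeval {R A : Type*} [CommSemiring R] [Semiring A] [Algebra R A]
    {a x y : A} (h : SemiconjBy a x y) (p : R[X]) : SemiconjBy a (aeval x p) (aeval y p) := by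
  induction p using Polynomial.induction_on with
  | C r => rw [aeval_C, aeval_C]; exact (Algebra.commutes r a).symm
  | add p q hp hq => simpa only [map_add] using hp.add_right hq
  | monomial k r ih => simpa only [pow_succ, ← mul_assoc, map_mul, aeval_X] using ih.mul_right h

theorem SemiconjBy.cfc_of_finite_spectrum {A : Type*} [Ring A] [StarRing A] [Algebra ℝ A]
    [TopologicalSpace A] [ContinuousFunctionalCalculus ℝ A IsSelfAdjoint] {a x y : A}
    (h : SemiconjBy a x y) (hx : IsSelfAdjoint x) (hy : IsSelfAdjoint y)
    (hxf : (spectrum ℝ x).Finite) (hyf : (spectrum ℝ y).Finite) (f : ℝ → ℝ) :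
    SemiconjBy a (cfc f x) (cfc f y) := by
  set s := (hxf.union hyf).toFinset
  set q := Lagrange.interpolate s id f
  have hq : ∀ z : A, spectrum ℝ z ⊆ ↑s → IsSelfAdjoint z → cfc f z = Polynomial.aeval z q := by
    intro z hz hz'
    rw [← cfc_polynomial q z]
    exact cfc_congr fun t ht =>
      (Lagrange.eval_interpolate_at_node f (Set.injOn_id _) (hz ht)).symm
  rw [hq x (by simp [s]) hx, hq y (by simp [s]) hy]
  exact h.aeval q

theorem Matrix.reindex_mem_unitaryGroup_s10 {m n α : Type*} [Fintype m] [DecidableEq m] [Fintype n]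
    [DecidableEq n] [CommRing α] [StarRing α] (e : m ≃ n) {U : Matrix m m α}
    (hU : U ∈ unitaryGroup m α) : reindex e e U ∈ unitaryGroup n α := by
  rw [mem_unitaryGroup_iff] at hU ⊢
  rw [star_eq_conjTranspose, conjTranspose_reindex, reindex_apply, reindex_apply,
    submatrix_mul_equiv, ← star_eq_conjTranspose, hU, submatrix_one_equiv]

theorem Matrix.fromBlocks_mem_unitaryGroup {n α : Type*} [Fintype n] [DecidableEq n] [CommRing α]
    [StarRing α] {A B C : Matrix n n α} (hB : Bᴴ = B) (hC : Cᴴ = C) (hAC : A * Aᴴ + C * C = 1)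
    (hAB : Aᴴ * A + B * B = 1) (hBC : A * B = C * A) :
    fromBlocks A C B (-Aᴴ) ∈ unitaryGroup (n ⊕ n) α := by
  have hCB : B * Aᴴ = Aᴴ * C := by
    simpa only [conjTranspose_mul, hB, hC] using congrArg conjTranspose hBC
  rw [mem_unitaryGroup_iff, star_eq_conjTranspose, fromBlocks_conjTranspose, hB, hC,
    conjTranspose_neg, conjTranspose_conjTranspose, fromBlocks_multiply, ← fromBlocks_one]
  congr 1
  · rw [hBC, mul_neg, add_neg_cancel]
  · rw [hCB, neg_mul, add_neg_cancel]
  · rw [neg_mul_neg, add_comm, hAB]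

section HalmosDilation

open scoped Matrix.Norms.L2Operator MatrixOrder

variable {n : Type*} [Fintype n] [DecidableEq n]

noncomputable def Matrix.halmosDilation (A : Matrix n n ℂ) : Matrix (n ⊕ n) (n ⊕ n) ℂ :=
  fromBlocks A (CFC.sqrt (1 - A * Aᴴ)) (CFC.sqrt (1 - Aᴴ * A)) (-Aᴴ)

theorem Matrix.one_sub_conjTranspose_mul_self_nonneg {A : Matrix n n ℂ} (hA : ‖A‖ ≤ 1) :
    0 ≤ 1 - Aᴴ * A := by
  have h : ‖Aᴴ * A‖ ≤ 1 := by
    rw [← star_eq_conjTranspose, CStarRing.norm_star_mul_self]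
    exact mul_le_one₀ hA (norm_nonneg A) hA
  exact sub_nonneg.mpr ((CStarAlgebra.norm_le_one_iff_of_nonneg _ (star_mul_self_nonneg A)).mp h)

theorem Matrix.halmosDilation_mem_unitaryGroup {A : Matrix n n ℂ} (hA : ‖A‖ ≤ 1) :
    A.halmosDilation ∈ unitaryGroup (n ⊕ n) ℂ := by
  have hB := one_sub_conjTranspose_mul_self_nonneg hA
  have hC : 0 ≤ 1 - A * Aᴴ := by
    simpa using
      one_sub_conjTranspose_mul_self_nonneg (A := Aᴴ) (by rwa [l2_opNorm_conjTranspose])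
  refine fromBlocks_mem_unitaryGroup (CFC.sqrt_nonneg _).isSelfAdjoint
    (CFC.sqrt_nonneg _).isSelfAdjoint ?_ ?_ ?_
  · rw [CFC.sqrt_mul_sqrt_self _ hC, add_sub_cancel]
  · rw [CFC.sqrt_mul_sqrt_self _ hB, add_sub_cancel]
  · have hsemi : SemiconjBy A (1 - Aᴴ * A) (1 - A * Aᴴ) := by
      simp only [SemiconjBy, mul_sub, sub_mul, mul_one, one_mul, mul_assoc]
    rw [CFC.sqrt_eq_real_sqrt _ hB, CFC.sqrt_eq_real_sqrt _ hC, cfcₙ_eq_cfc, cfcₙ_eq_cfc]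
    exact hsemi.cfc_of_finite_spectrum hB.isSelfAdjoint hC.isSelfAdjoint
      finite_real_spectrum finite_real_spectrum _

end HalmosDilation

theorem leadBlock_reindex_fromBlocks {N : ℕ} (h : N ≤ 2 * N)
    (A B C D : Matrix (Fin N) (Fin N) ℂ) :
    leadBlock h (reindex (finSumFinEquiv.trans (finCongr (two_mul N).symm))
      (finSumFinEquiv.trans (finCongr (two_mul N).symm)) (fromBlocks A B C D)) = A := by
  ext i j
  have hi : ∀ k : Fin N, (finCongr (two_mul N).symm).symm (Fin.castLE h k) = Fin.castAdd N k :=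
    fun k => Fin.ext rfl
  simp only [leadBlock, reindex_apply, submatrix_apply, of_apply, Equiv.symm_trans_apply, hi,
    finSumFinEquiv_symm_apply_castAdd, fromBlocks_apply₁₁]

/-- unitary dilation. Every `N × N` complex matrix `A` with spectral norm
`‖A‖ ≤ 1` is the leading principal `N × N` block of some `2N × 2N` unitary matrix. -/
theorem unitary_dilation (N : ℕ) (A : Matrix (Fin N) (Fin N) ℂ) (hA : specNorm A ≤ 1) :
    ∃ U : Matrix (Fin (2 * N)) (Fin (2 * N)) ℂ,
      U ∈ Matrix.unitaryGroup (Fin (2 * N)) ℂ ∧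
      leadBlock (by omega) U = A := by
  let e : Fin N ⊕ Fin N ≃ Fin (2 * N) := finSumFinEquiv.trans (finCongr (two_mul N).symm)
  exact ⟨reindex e e A.halmosDilation,
    reindex_mem_unitaryGroup_s10 e (halmosDilation_mem_unitaryGroup hA),
    leadBlock_reindex_fromBlocks _ _ _ _ _⟩
end
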